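/- Let A ∈ ℝ^{m×n} with SVD A = UΣVᵀ and singular values σ₁ ≥ … ≥ σ_p (p = min(m,n)). For 1 ≤ r < p, let U_r and V_r consist of the first r columns of U and V. Then U_r U_rᵀ A = A V_r V_rᵀ = U_r Σ_r V_rᵀ, and this matrix minimizes ‖A − B‖_F over all matrices B of rank at most r. -/

import Mathlib

/-!
Write the thin SVD `A = W₁ Σ W₂ᵀ` with isometries `W₁, W₂` (the first `min m n` columns of
`U, V`). Projecting onto the leading `r` left or right singular vectors, or multiplying out the
leading `r` singular triples, all give `W₁ Σ_r W₂ᵀ`, where `Σ_r` keeps the top `r` singular values.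

For optimality, let `P` be the orthogonal projection onto the column space of `B`, so `tr P ≤ r`.
Pythagoras gives `‖A - B‖² ≥ ‖(1 - P) A‖² = ∑ sₜ² - ∑ sₜ² τₜ` with `τₜ = (W₁ᵀ P W₁)ₜₜ ∈ [0, 1]`
and `∑ τₜ ≤ tr P ≤ r`. Among such weights, `∑ sₜ² τₜ` is largest when the weight sits on the `r`
largest values (all of which are at least `s_r²`, all others at most `s_r²`), so
`‖A - B‖² ≥ ∑_{t ≥ r} sₜ² = ‖A - W₁ Σ_r W₂ᵀ‖²`.
-/

open Matrix BigOperators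

noncomputable def frobNorm {α β : Type*} [Fintype α] [Fintype β]
    (A : Matrix α β ℝ) : ℝ :=
  Real.sqrt (∑ i, ∑ j, (A i j) ^ 2)

section Frobenius

variable {α β : Type*} [Fintype α] [Fintype β]

theorem frobNorm_eq_sqrt_trace (A : Matrix α β ℝ) : frobNorm A = √(Aᵀ * A).trace := by
  simp only [frobNorm, trace, diag, mul_apply, transpose_apply, sq]
  rw [Finset.sum_comm]

theorem trace_transpose_mul_self_add_of_transpose_mul_eq_zero {X Y : Matrix α β ℝ}
    (h : Xᵀ * Y = 0) :
    ((X + Y)ᵀ * (X + Y)).trace = (Xᵀ * X).trace + (Yᵀ * Y).trace := by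
  have h' : Yᵀ * X = 0 := by simpa using congrArg transpose h
  rw [transpose_add, Matrix.add_mul, Matrix.mul_add, Matrix.mul_add, h, h', add_zero, zero_add,
    trace_add]

end Frobenius

theorem sum_mul_le_sum_of_threshold {ι : Type*} [Fintype ι] (F : Finset ι) (w τ : ι → ℝ)
    {θ : ℝ} (hθ : 0 ≤ θ) (hF : ∀ t ∈ F, θ ≤ w t) (hFc : ∀ t ∉ F, w t ≤ θ)
    (hτ₀ : ∀ t, 0 ≤ τ t) (hτ₁ : ∀ t, τ t ≤ 1) (hτ : ∑ t, τ t ≤ F.card) :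
    ∑ t, w t * τ t ≤ ∑ t ∈ F, w t := by
  classical
  have hpointwise : ∀ t, w t * τ t - (if t ∈ F then w t else 0) ≤
      θ * τ t - (if t ∈ F then θ else 0) := by
    intro t
    split_ifs with ht
    · nlinarith [hF t ht, hτ₁ t]
    · nlinarith [hFc t ht, hτ₀ t]
  have := Finset.sum_le_sum fun t (_ : t ∈ Finset.univ) => hpointwise t
  simp only [Finset.sum_sub_distrib, ← Finset.mul_sum, Finset.sum_ite_mem, Finset.univ_inter,
    Finset.sum_const, nsmul_eq_mul] at this
  nlinarith

theorem Function.Injective.sum_indicator_range {ι κ M : Type*} [Fintype ι] [Fintype κ]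
    [AddCommMonoid M] {c : κ → ι} (hc : Function.Injective c) (h : ι → M) :
    ∑ t, (Set.range c).indicator h t = ∑ k, h (c k) := by
  classical
  have : Set.range c = ↑(Finset.univ.map ⟨c, hc⟩) := by simp
  rw [this, Finset.sum_indicator_subset _ (Finset.subset_univ _), Finset.sum_map]
  rfl

section StarProjection

variable {α β ι : Type*} [Fintype α] {P : Matrix α α ℝ}

theorem IsStarProjection.transpose_eq (hP : IsStarProjection P) : Pᵀ = P := by
  simpa [star_eq_conjTranspose] using hP.isSelfAdjoint.star_eq

theorem IsStarProjection.transpose_mul_self_mul (hP : IsStarProjection P) (X : Matrix α ι ℝ) :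
    (P * X)ᵀ * (P * X) = Xᵀ * P * X := by
  rw [transpose_mul, hP.transpose_eq, Matrix.mul_assoc, ← Matrix.mul_assoc P,
    hP.isIdempotentElem.eq, Matrix.mul_assoc]

theorem IsStarProjection.posSemidef_transpose_mul_mul [Fintype ι] (hP : IsStarProjection P)
    (X : Matrix α ι ℝ) : (Xᵀ * P * X).PosSemidef := by
  simpa [← hP.transpose_mul_self_mul] using posSemidef_conjTranspose_mul_self (P * X)

variable [DecidableEq α]

theorem IsStarProjection.diag_transpose_mul_mul_le_one [Fintype ι] [DecidableEq ι]
    (hP : IsStarProjection P) {W : Matrix α ι ℝ} (hW : Wᵀ * W = 1) (t : ι) :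
    (Wᵀ * P * W) t t ≤ 1 := by
  have := (hP.one_sub.posSemidef_transpose_mul_mul W).diag_nonneg (i := t)
  simpa only [Matrix.mul_sub, Matrix.mul_one, Matrix.sub_mul, hW, Matrix.sub_apply, one_apply_eq,
    sub_nonneg] using this

theorem IsStarProjection.trace_transpose_mul_mul_le [Fintype ι] [DecidableEq ι]
    (hP : IsStarProjection P) {W : Matrix α ι ℝ} (hW : Wᵀ * W = 1) :
    (Wᵀ * P * W).trace ≤ P.trace := by
  have hQ : IsStarProjection (W * Wᵀ) := by
    refine isStarProjection_iff'.mpr ⟨?_, ?_⟩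
    · rw [Matrix.mul_assoc, ← Matrix.mul_assoc Wᵀ, hW, Matrix.one_mul]
    · simp [star_eq_conjTranspose]
  -- `tr P - tr (Wᵀ P W) = tr (P (1 - W Wᵀ) P) ≥ 0`
  have := (hQ.one_sub.posSemidef_transpose_mul_mul P).trace_nonneg
  rw [hP.transpose_eq, Matrix.mul_sub, Matrix.sub_mul, trace_sub, Matrix.mul_one,
    hP.isIdempotentElem.eq, trace_mul_comm, ← Matrix.mul_assoc P P, hP.isIdempotentElem.eq,
    trace_mul_comm, Matrix.mul_assoc, trace_mul_comm] at this
  linarith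

theorem IsStarProjection.trace_one_sub_mul_le_of_mul_eq_self [Fintype β]
    (hP : IsStarProjection P) {B : Matrix α β ℝ} (hPB : P * B = B) (A : Matrix α β ℝ) :
    (((1 - P) * A)ᵀ * ((1 - P) * A)).trace ≤ ((A - B)ᵀ * (A - B)).trace := by
  have hsplit : A - B = (1 - P) * A + P * (A - B) := by
    rw [Matrix.mul_sub, hPB, Matrix.sub_mul, Matrix.one_mul]; abel
  have horth : ((1 - P) * A)ᵀ * (P * (A - B)) = 0 := by
    rw [transpose_mul, hP.one_sub.transpose_eq, Matrix.mul_assoc, ← Matrix.mul_assoc (1 - P),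
      hP.one_sub_mul_self, Matrix.zero_mul, Matrix.mul_zero]
  rw [hsplit, trace_transpose_mul_self_add_of_transpose_mul_eq_zero horth,
    le_add_iff_nonneg_right, hP.transpose_mul_self_mul]
  exact (hP.posSemidef_transpose_mul_mul _).trace_nonneg

theorem exists_isStarProjection_mul_eq_self_trace_eq_rank [Fintype β] [DecidableEq β]
    (B : Matrix α β ℝ) : ∃ P : Matrix α α ℝ, IsStarProjection P ∧ P * B = B ∧ P.trace = B.rank := by
  set K := LinearMap.range (toEuclideanLin B)
  set P := (toEuclideanCLM (n := α) (𝕜 := ℝ)).symm K.starProjection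
  have hPK : toEuclideanCLM (n := α) (𝕜 := ℝ) P = K.starProjection :=
    StarAlgEquiv.apply_symm_apply _ _
  refine ⟨P, isStarProjection_starProjection.map
    (F := (EuclideanSpace ℝ α →L[ℝ] EuclideanSpace ℝ α) ≃⋆ₐ[ℝ] Matrix α α ℝ) _, ?_, ?_⟩
  · refine toLin'.injective (LinearMap.ext fun x => ?_)
    have hx : WithLp.toLp 2 (B *ᵥ x) ∈ K := ⟨WithLp.toLp 2 x, rfl⟩
    have := congrArg WithLp.ofLp (Submodule.starProjection_eq_self_iff.mpr hx)
    rw [← hPK, ofLp_toEuclideanCLM] at this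
    simpa [← mulVec_mulVec] using this
  · have hproj : LinearMap.IsProj K (K.starProjection : EuclideanSpace ℝ α →ₗ[ℝ] _) :=
      ⟨fun x => (K.orthogonalProjectionOnto x).2,
        fun x hx => Submodule.starProjection_eq_self_iff.mpr hx⟩
    rw [show B.rank = Module.finrank ℝ K from rank_eq_finrank_range_toLin B
      (EuclideanSpace.basisFun α ℝ).toBasis (EuclideanSpace.basisFun β ℝ).toBasis,
      ← hproj.trace, ← hPK, ← trace_toLin_eq _ (EuclideanSpace.basisFun α ℝ).toBasis]
    rfl

end StarProjection

theorem transpose_submatrix_id_mul_submatrix_id {R α ι κ : Type*} [Semiring R] [Fintype α]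
    [DecidableEq ι] [DecidableEq κ] {W : Matrix α ι R} (hW : Wᵀ * W = 1) {c : κ → ι}
    (hc : Function.Injective c) : (W.submatrix id c)ᵀ * W.submatrix id c = 1 := by
  rw [transpose_submatrix, ← submatrix_mul _ _ _ id _ Function.bijective_id, hW,
    submatrix_one _ hc]

section TruncatedSVD

variable {α β ι κ : Type*} [Fintype ι] [DecidableEq ι] [Fintype κ]
  {W₁ : Matrix α ι ℝ} {W₂ : Matrix β ι ℝ} {c : κ → ι}

theorem submatrix_id_mul_diagonal_mul_transpose [DecidableEq κ] (M : Matrix α ι ℝ)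
    (N : Matrix β ι ℝ) (hc : Function.Injective c) (d : ι → ℝ) :
    M.submatrix id c * diagonal (d ∘ c) * (N.submatrix id c)ᵀ =
      M * diagonal ((Set.range c).indicator d) * Nᵀ := by
  ext i j
  rw [mul_apply, mul_apply]
  simp only [mul_diagonal, transpose_apply, submatrix_apply, id, Function.comp]
  rw [← hc.sum_indicator_range fun t => M i t * d t * N j t]
  refine Finset.sum_congr rfl fun t _ => ?_
  by_cases ht : t ∈ Set.range c <;> simp [ht]

theorem submatrix_id_mul_transpose_submatrix_id [DecidableEq κ] (W : Matrix α ι ℝ)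
    (hc : Function.Injective c) :
    W.submatrix id c * (W.submatrix id c)ᵀ =
      W * diagonal ((Set.range c).indicator (1 : ι → ℝ)) * Wᵀ := by
  simpa using submatrix_id_mul_diagonal_mul_transpose W W hc 1

theorem submatrix_id_mul_transpose_mul_svd [Fintype α] [DecidableEq κ] (h₁ : W₁ᵀ * W₁ = 1)
    (hc : Function.Injective c) (s : ι → ℝ) :
    W₁.submatrix id c * (W₁.submatrix id c)ᵀ * (W₁ * diagonal s * W₂ᵀ) =
      W₁ * diagonal ((Set.range c).indicator s) * W₂ᵀ := by
  rw [submatrix_id_mul_transpose_submatrix_id W₁ hc]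
  simp only [Matrix.mul_assoc]
  rw [← Matrix.mul_assoc W₁ᵀ, h₁, Matrix.one_mul, ← Matrix.mul_assoc (diagonal _),
    diagonal_mul_diagonal]
  simp_rw [← Set.indicator_mul_left, Pi.one_apply, one_mul]

theorem svd_mul_submatrix_id_mul_transpose [Fintype β] [DecidableEq κ] (h₂ : W₂ᵀ * W₂ = 1)
    (hc : Function.Injective c) (s : ι → ℝ) :
    W₁ * diagonal s * W₂ᵀ * W₂.submatrix id c * (W₂.submatrix id c)ᵀ =
      W₁ * diagonal ((Set.range c).indicator s) * W₂ᵀ := by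
  rw [Matrix.mul_assoc _ (W₂.submatrix id c), submatrix_id_mul_transpose_submatrix_id W₂ hc]
  simp only [Matrix.mul_assoc]
  rw [← Matrix.mul_assoc W₂ᵀ, h₂, Matrix.one_mul, ← Matrix.mul_assoc (diagonal _),
    diagonal_mul_diagonal]
  simp_rw [← Set.indicator_mul_right, Pi.one_apply, mul_one]

theorem trace_transpose_mul_mul_svd [Fintype α] [Fintype β] (h₂ : W₂ᵀ * W₂ = 1) (d : ι → ℝ)
    (Y : Matrix α α ℝ) :
    ((W₁ * diagonal d * W₂ᵀ)ᵀ * Y * (W₁ * diagonal d * W₂ᵀ)).trace =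
      ∑ t, d t ^ 2 * (W₁ᵀ * Y * W₁) t t := by
  have : (W₁ * diagonal d * W₂ᵀ)ᵀ * Y * (W₁ * diagonal d * W₂ᵀ) =
      W₂ * (diagonal d * (W₁ᵀ * Y * W₁) * diagonal d * W₂ᵀ) := by
    simp only [transpose_mul, transpose_transpose, diagonal_transpose, Matrix.mul_assoc]
  rw [this, trace_mul_comm, Matrix.mul_assoc _ W₂ᵀ, h₂, Matrix.mul_one]
  simp only [trace, diag, mul_diagonal, diagonal_mul]
  exact Finset.sum_congr rfl fun t _ => by ring

theorem frobNorm_sub_svd_truncation_le [Fintype α] [Fintype β] [DecidableEq α] [DecidableEq β]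
    (h₁ : W₁ᵀ * W₁ = 1) (h₂ : W₂ᵀ * W₂ = 1) (s : ι → ℝ) (hc : Function.Injective c)
    {θ : ℝ} (hθ : 0 ≤ θ)
    (hlarge : ∀ k, θ ≤ s (c k) ^ 2) (hsmall : ∀ t ∉ Set.range c, s t ^ 2 ≤ θ)
    {B : Matrix α β ℝ} (hB : B.rank ≤ Fintype.card κ) :
    frobNorm (W₁ * diagonal s * W₂ᵀ - W₁ * diagonal ((Set.range c).indicator s) * W₂ᵀ) ≤
      frobNorm (W₁ * diagonal s * W₂ᵀ - B) := by
  set A := W₁ * diagonal s * W₂ᵀ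
  obtain ⟨P, hP, hPB, hPtr⟩ := exists_isStarProjection_mul_eq_self_trace_eq_rank B
  set F := Finset.univ.map ⟨c, hc⟩
  have hF : ∀ t, t ∈ F ↔ t ∈ Set.range c := by simp [F]
  have hW₁ : W₁ᵀ * (1 : Matrix α α ℝ) * W₁ = 1 := by rw [Matrix.mul_one, h₁]
  have hbathtub : ∑ t, s t ^ 2 * (W₁ᵀ * P * W₁) t t ≤ ∑ t ∈ F, s t ^ 2 := by
    refine sum_mul_le_sum_of_threshold F _ _ hθ ?_ ?_
      (fun t => (hP.posSemidef_transpose_mul_mul W₁).diag_nonneg)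
      (hP.diag_transpose_mul_mul_le_one h₁) ?_
    · intro t ht
      obtain ⟨k, rfl⟩ := (hF t).mp ht
      exact hlarge k
    · exact fun t ht => hsmall t (mt (hF t).mpr ht)
    · calc ∑ t, (W₁ᵀ * P * W₁) t t = (W₁ᵀ * P * W₁).trace := rfl
        _ ≤ P.trace := hP.trace_transpose_mul_mul_le h₁
        _ ≤ F.card := by rw [hPtr, Finset.card_map, Finset.card_univ]; exact_mod_cast hB
  have hdiff : A - W₁ * diagonal ((Set.range c).indicator s) * W₂ᵀ =
      W₁ * diagonal ((Set.range c)ᶜ.indicator s) * W₂ᵀ := by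
    rw [← Matrix.sub_mul, ← Matrix.mul_sub, diagonal_sub, ← Pi.sub_def, Set.indicator_compl]
  rw [hdiff, frobNorm_eq_sqrt_trace, frobNorm_eq_sqrt_trace]
  refine Real.sqrt_le_sqrt ?_
  calc ((W₁ * diagonal ((Set.range c)ᶜ.indicator s) * W₂ᵀ)ᵀ *
        (W₁ * diagonal ((Set.range c)ᶜ.indicator s) * W₂ᵀ)).trace
      = ∑ t, s t ^ 2 - ∑ t ∈ F, s t ^ 2 := by
        have hpointwise : ∀ t, (Set.range c)ᶜ.indicator s t ^ 2 * (1 : Matrix ι ι ℝ) t t =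
            s t ^ 2 - if t ∈ F then s t ^ 2 else 0 := by
          intro t
          by_cases ht : t ∈ Set.range c <;> simp [ht, hF]
        rw [← Matrix.mul_one (_ᵀ), trace_transpose_mul_mul_svd h₂, hW₁,
          Finset.sum_congr rfl fun t _ => hpointwise t, Finset.sum_sub_distrib, Finset.sum_ite_mem,
          Finset.univ_inter]
    _ ≤ ∑ t, s t ^ 2 - ∑ t, s t ^ 2 * (W₁ᵀ * P * W₁) t t := by linarith
    _ = (((1 - P) * A)ᵀ * ((1 - P) * A)).trace := by
        rw [hP.one_sub.transpose_mul_self_mul, Matrix.mul_sub, Matrix.sub_mul, trace_sub,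
          trace_transpose_mul_mul_svd h₂, trace_transpose_mul_mul_svd h₂, hW₁]
        simp
    _ ≤ ((A - B)ᵀ * (A - B)).trace := hP.trace_one_sub_mul_le_of_mul_eq_self hPB A

end TruncatedSVD

section RectangularDiagonal

variable {m n : ℕ} {S : Matrix (Fin m) (Fin n) ℝ} {s : Fin (min m n) → ℝ}

theorem rectDiag_eq_submatrix_one_mul_diagonal_mul
    (hS : ∀ i j, S i j = if h : (i : ℕ) = j then s ⟨i, lt_min i.isLt (h ▸ j.isLt)⟩ else 0) :
    S = (1 : Matrix (Fin m) (Fin m) ℝ).submatrix id (Fin.castLE (min_le_left m n)) *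
      diagonal s *
      ((1 : Matrix (Fin n) (Fin n) ℝ).submatrix id (Fin.castLE (min_le_right m n)))ᵀ := by
  ext i j
  rw [hS, mul_apply]
  simp only [mul_diagonal, transpose_apply, submatrix_apply, id, one_apply, Fin.ext_iff,
    Fin.val_castLE]
  split_ifs with h
  · rw [Finset.sum_eq_single ⟨i, lt_min i.isLt (h ▸ j.isLt)⟩]
    · simp [h]
    · intro t _ ht
      simp only [ne_eq, Fin.ext_iff] at ht
      simp [Ne.symm ht]
    · simp
  · refine (Finset.sum_eq_zero fun t _ => ?_).symm
    by_cases hit : (i : ℕ) = t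
    · simp [hit, show (j : ℕ) ≠ t from fun hjt => h (hit.trans hjt.symm)]
    · simp [hit]

theorem mul_rectDiag_mul_transpose {α β : Type*} [Fintype α] [Fintype β]
    (hS : ∀ i j, S i j = if h : (i : ℕ) = j then s ⟨i, lt_min i.isLt (h ▸ j.isLt)⟩ else 0)
    (U : Matrix α (Fin m) ℝ) (V : Matrix β (Fin n) ℝ) :
    U * S * Vᵀ = U.submatrix id (Fin.castLE (min_le_left m n)) * diagonal s *
      (V.submatrix id (Fin.castLE (min_le_right m n)))ᵀ := by
  have hU := mul_submatrix_one (Equiv.refl _) (Fin.castLE (min_le_left m n)) U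
  have hV := one_submatrix_mul (Fin.castLE (min_le_right m n)) (Equiv.refl _) Vᵀ
  simp only [Equiv.coe_refl, Equiv.refl_symm, Function.id_comp] at hU hV
  rw [rectDiag_eq_submatrix_one_mul_diagonal_mul hS, transpose_submatrix, transpose_one,
    ← Matrix.mul_assoc, ← Matrix.mul_assoc, hU, Matrix.mul_assoc _ _ Vᵀ, hV, transpose_submatrix]

end RectangularDiagonal

/-- Eckart–Young–Mirsky, projection form: If `A = UΣVᵀ` is an SVD
with singular values `s` sorted decreasingly and `1 ≤ r < min(m,n)`, then
`U_r U_rᵀ A = A V_r V_rᵀ = U_r Σ_r V_rᵀ` and this matrix minimizes `‖A − B‖_F`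
over all `B` of rank at most `r`. -/
theorem stmt9 {m n : ℕ} (r : ℕ) (hrp : r < min m n)
    (A : Matrix (Fin m) (Fin n) ℝ)
    (U : Matrix (Fin m) (Fin m) ℝ) (V : Matrix (Fin n) (Fin n) ℝ)
    (S : Matrix (Fin m) (Fin n) ℝ) (s : Fin (min m n) → ℝ)
    (hU : Uᵀ * U = 1) (hV : Vᵀ * V = 1)
    (hS : ∀ (i : Fin m) (j : Fin n), S i j =
      if h : (i : ℕ) = (j : ℕ) then s ⟨i, lt_min i.isLt (h ▸ j.isLt)⟩ else 0)
    (hmono : Antitone s) (hpos : ∀ i, 0 ≤ s i)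
    (hsvd : A = U * S * Vᵀ)
    (Ur : Matrix (Fin m) (Fin r) ℝ) (Vr : Matrix (Fin n) (Fin r) ℝ)
    (hUr : Ur = U.submatrix id (Fin.castLE (by omega)))
    (hVr : Vr = V.submatrix id (Fin.castLE (by omega))) :
    Ur * Urᵀ * A = A * Vr * Vrᵀ ∧
    Ur * Urᵀ * A =
      Ur * Matrix.diagonal (fun i : Fin r => s (Fin.castLE hrp.le i)) * Vrᵀ ∧
    ∀ B : Matrix (Fin m) (Fin n) ℝ, B.rank ≤ r →
      frobNorm (A - Ur * Urᵀ * A) ≤ frobNorm (A - B) := by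
  set W₁ := U.submatrix id (Fin.castLE (min_le_left m n))
  set W₂ := V.submatrix id (Fin.castLE (min_le_right m n))
  set c : Fin r → Fin (min m n) := Fin.castLE hrp.le
  have hc : Function.Injective c := Fin.castLE_injective _
  have h₁ : W₁ᵀ * W₁ = 1 := transpose_submatrix_id_mul_submatrix_id hU (Fin.castLE_injective _)
  have h₂ : W₂ᵀ * W₂ = 1 := transpose_submatrix_id_mul_submatrix_id hV (Fin.castLE_injective _)
  have hA : A = W₁ * diagonal s * W₂ᵀ := hsvd.trans (mul_rectDiag_mul_transpose hS U V)
  -- `Fin.castLE` composes definitionally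
  have hUr' : Ur = W₁.submatrix id c := hUr
  have hVr' : Vr = W₂.submatrix id c := hVr
  have htrunc : Ur * Urᵀ * A = W₁ * diagonal ((Set.range c).indicator s) * W₂ᵀ := by
    rw [hUr', hA, submatrix_id_mul_transpose_mul_svd h₁ hc]
  refine ⟨?_, ?_, fun B hB => ?_⟩
  · rw [htrunc, hVr', hA, Matrix.mul_assoc _ (W₂.submatrix id c), ← Matrix.mul_assoc,
      svd_mul_submatrix_id_mul_transpose h₂ hc]
  · rw [htrunc, hUr', hVr']
    exact (submatrix_id_mul_diagonal_mul_transpose W₁ W₂ hc s).symm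
  · rw [htrunc, hA]
    refine frobNorm_sub_svd_truncation_le h₁ h₂ s hc (sq_nonneg (s ⟨r, hrp⟩)) (fun k => ?_)
      (fun t ht => ?_) (by simpa using hB)
    · exact pow_le_pow_left₀ (hpos _) (hmono (Fin.le_def.mpr k.isLt.le)) 2
    · rw [Fin.range_castLE, Set.mem_ofPred_eq, not_lt] at ht
      exact pow_le_pow_left₀ (hpos _) (hmono (Fin.le_def.mpr ht)) 2
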